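/- Cardinality characterization: For every k ≥ 0 and every recursive causal team S over σ: S ⊨^c χ_k if and only if |S⁻| ≤ k, where χ_0 := ⊥ (an abbreviation for X=x ∧ ¬(X=x)), χ_1 := ⋀_{V∈Dom} =(V), and for k > 1, χ_k := χ_1 ∨ ⋯ ∨ χ_1 (k-fold tensor disjunction). -/

import Mathlib

open scoped Classical
set_option linter.unusedSectionVars false

noncomputable section

/-- Assignments of values to variables. -/
abbrev Asg (V : Type) (Val : V → Type) : Type := (v : V) → Val v

/-- A recursive system of functions over the signature `(V, Val)`:
each endogenous variable `v ∈ En` has a parent set `pa v` and a function `fn v`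
computing its value from the values of its parents; recursiveness says that the
induced causal graph is acyclic. -/
structure Sys (V : Type) (Val : V → Type) : Type where
  En : Finset V
  pa : V → Finset V
  fn : (v : V) → ((w : V) → w ∈ pa v → Val w) → Val v
  recursive : ∀ x : V, ¬ Relation.TransGen (fun a b => b ∈ En ∧ a ∈ pa b) x x

variable {V : Type} [Fintype V] [DecidableEq V] [Nonempty V]
  {Val : V → Type} [∀ v, Fintype (Val v)] [∀ v, DecidableEq (Val v)] [∀ v, Nonempty (Val v)]

namespace CausalTeam

/-- The edge relation of the causal graph of a system of functions. -/
@[reducible] def Edge (F : Sys V Val) (a b : V) : Prop := b ∈ F.En ∧ a ∈ F.pa b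

theorem wfEdge (F : Sys V Val) : WellFounded (Edge F) := by
  have h2 : WellFounded (Relation.TransGen (Edge F)) := by
    have hirr : IsIrrefl V (Relation.TransGen (Edge F)) := ⟨F.recursive⟩
    have htr : IsTrans V (Relation.TransGen (Edge F)) :=
      ⟨fun _ _ _ h h' => Relation.TransGen.trans h h'⟩
    exact Finite.wellFounded_of_trans_of_irrefl _
  exact Subrelation.wf (fun h => Relation.TransGen.single h) h2

/-- An assignment is compatible with a system of functions if every endogenous
variable takes the value prescribed by its function. -/
def Compat (F : Sys V Val) (s : Asg V Val) : Prop :=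
  ∀ v ∈ F.En, s v = F.fn v (fun w _ => s w)

/-- The variables occurring in a conjunction of equations `𝐗 = 𝐱`. -/
def ikeys (I : List ((v : V) × Val v)) : List V := I.map Sigma.fst

/-- A conjunction of equations is consistent if it contains no pair `X = x`, `X = x'`
with distinct values `x ≠ x'`. -/
def IConsistent (I : List ((v : V) × Val v)) : Prop :=
  ∀ p ∈ I, ∀ q ∈ I, p.1 = q.1 → p = q

/-- Look up the (first) value assigned to a variable by a conjunction of equations. -/
def ilookup : List ((v : V) × Val v) → (v : V) → Option (Val v)
  | [], _ => none
  | p :: I, v => if h : p.1 = v then some (h ▸ p.2) else ilookup I v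

/-- The intervened system of functions `F_{𝐗=𝐱}`: the restriction of `F` to `En(F) ∖ 𝐗`. -/
def doSys (F : Sys V Val) (I : List ((v : V) × Val v)) : Sys V Val where
  En := F.En.filter (fun v => v ∉ ikeys I)
  pa := F.pa
  fn := F.fn
  recursive := by
    intro x hx
    refine F.recursive x (Relation.TransGen.mono ?_ _ _ hx)
    intro a b hab
    exact ⟨(Finset.mem_filter.mp hab.1).1, hab.2⟩

/-- The intervened assignment `s_{𝐗=𝐱}`: variables in `𝐗` get the prescribed values,
exogenous variables outside `𝐗` keep their values, and endogenous variables outside `𝐗`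
are recomputed (recursively) by their functions. -/
def doAsg (F : Sys V Val) (I : List ((v : V) × Val v)) (s : Asg V Val) : Asg V Val :=
  (wfEdge F).fix (C := fun v => Val v) fun v ih =>
    match ilookup I v with
    | some x => x
    | none => if h : v ∈ F.En then F.fn v (fun w hw => ih w ⟨h, hw⟩) else s v

/-- Formulas of the languages CO[σ], CO⩗[σ] and COD[σ]:
equations `X = x`, dependence atoms `=(𝐗;Y)`, negation, conjunction,
tensor disjunction `∨`, intuitionistic disjunction `⩗`, and counterfactuals `𝐗=𝐱 □→ φ`. -/
inductive Fml (V : Type) (Val : V → Type) : Type where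
  | eq : (v : V) → Val v → Fml V Val
  | dep : List V → V → Fml V Val
  | neg : Fml V Val → Fml V Val
  | and : Fml V Val → Fml V Val → Fml V Val
  | or : Fml V Val → Fml V Val → Fml V Val
  | ior : Fml V Val → Fml V Val → Fml V Val
  | cf : List ((v : V) × Val v) → Fml V Val → Fml V Val

/-- CO[σ]-formulas: equations, closed under ¬, ∧, ∨ and counterfactuals. -/
inductive IsCO : Fml V Val → Prop where
  | eq (v : V) (x : Val v) : IsCO (Fml.eq v x)
  | neg {φ} : IsCO φ → IsCO (Fml.neg φ)
  | and {φ ψ} : IsCO φ → IsCO ψ → IsCO (Fml.and φ ψ)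
  | or {φ ψ} : IsCO φ → IsCO ψ → IsCO (Fml.or φ ψ)
  | cf {φ} (I : List ((v : V) × Val v)) : IsCO φ → IsCO (Fml.cf I φ)

/-- CO⩗[σ]-formulas: additionally closed under ⩗; negation applies to CO-formulas only. -/
inductive IsCOV : Fml V Val → Prop where
  | eq (v : V) (x : Val v) : IsCOV (Fml.eq v x)
  | neg {φ} : IsCO φ → IsCOV (Fml.neg φ)
  | and {φ ψ} : IsCOV φ → IsCOV ψ → IsCOV (Fml.and φ ψ)
  | or {φ ψ} : IsCOV φ → IsCOV ψ → IsCOV (Fml.or φ ψ)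
  | ior {φ ψ} : IsCOV φ → IsCOV ψ → IsCOV (Fml.ior φ ψ)
  | cf {φ} (I : List ((v : V) × Val v)) : IsCOV φ → IsCOV (Fml.cf I φ)

/-- COD[σ]-formulas: additionally allow dependence atoms; negation applies to
CO-formulas only. -/
inductive IsCOD : Fml V Val → Prop where
  | eq (v : V) (x : Val v) : IsCOD (Fml.eq v x)
  | dep (X : List V) (Y : V) : IsCOD (Fml.dep X Y)
  | neg {φ} : IsCO φ → IsCOD (Fml.neg φ)
  | and {φ ψ} : IsCOD φ → IsCOD ψ → IsCOD (Fml.and φ ψ)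
  | or {φ ψ} : IsCOD φ → IsCOD ψ → IsCOD (Fml.or φ ψ)
  | cf {φ} (I : List ((v : V) × Val v)) : IsCOD φ → IsCOD (Fml.cf I φ)

/-- Satisfaction over causal teams `(Tm, F)` (the causal team semantics `⊨^c`). -/
def satC : Set (Asg V Val) → Sys V Val → Fml V Val → Prop
  | Tm, _, Fml.eq v x => ∀ s ∈ Tm, s v = x
  | Tm, _, Fml.dep X Y => ∀ s ∈ Tm, ∀ t ∈ Tm, (∀ w ∈ X, s w = t w) → s Y = t Y
  | Tm, F, Fml.neg φ => ∀ s ∈ Tm, ¬ satC {s} F φ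
  | Tm, F, Fml.and φ ψ => satC Tm F φ ∧ satC Tm F ψ
  | Tm, F, Fml.or φ ψ => ∃ T1 T2 : Set (Asg V Val), T1 ∪ T2 = Tm ∧ satC T1 F φ ∧ satC T2 F ψ
  | Tm, F, Fml.ior φ ψ => satC Tm F φ ∨ satC Tm F ψ
  | Tm, F, Fml.cf I φ => IConsistent I → satC (doAsg F I '' Tm) (doSys F I) φ

/-- Satisfaction over generalized causal teams (the semantics `⊨^g`). -/
def satG : Set (Asg V Val × Sys V Val) → Fml V Val → Prop
  | T, Fml.eq v x => ∀ p ∈ T, p.1 v = x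
  | T, Fml.dep X Y => ∀ p ∈ T, ∀ q ∈ T, (∀ w ∈ X, p.1 w = q.1 w) → p.1 Y = q.1 Y
  | T, Fml.neg φ => ∀ p ∈ T, ¬ satG {p} φ
  | T, Fml.and φ ψ => satG T φ ∧ satG T ψ
  | T, Fml.or φ ψ => ∃ T1 T2 : Set (Asg V Val × Sys V Val), T1 ∪ T2 = T ∧ satG T1 φ ∧ satG T2 ψ
  | T, Fml.ior φ ψ => satG T φ ∨ satG T ψ
  | T, Fml.cf I φ => IConsistent I →
      satG ((fun p : Asg V Val × Sys V Val => (doAsg p.2 I p.1, doSys p.2 I)) '' T) φ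

/-- A generalized causal team: a set of pairs `(s, F)` with `s` compatible with `F`. -/
def GTOk (T : Set (Asg V Val × Sys V Val)) : Prop := ∀ p ∈ T, Compat p.2 p.1

/-- The falsum `⊥`, an abbreviation for `X=x ∧ ¬(X=x)`. -/
def fBot : Fml V Val :=
  Fml.and (Fml.eq (Classical.arbitrary V) (Classical.arbitrary (Val (Classical.arbitrary V))))
    (Fml.neg (Fml.eq (Classical.arbitrary V) (Classical.arbitrary (Val (Classical.arbitrary V)))))

/-- A canonical tautology. -/
def fTop : Fml V Val := Fml.neg fBot

/-- Finite conjunction of a list of formulas. -/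
def bigAnd : List (Fml V Val) → Fml V Val
  | [] => fTop
  | [φ] => φ
  | φ :: ψ :: rest => Fml.and φ (bigAnd (ψ :: rest))

/-- Finite tensor disjunction of a list of formulas. -/
def bigOr : List (Fml V Val) → Fml V Val
  | [] => fBot
  | [φ] => φ
  | φ :: ψ :: rest => Fml.or φ (bigOr (ψ :: rest))

/-- Finite intuitionistic disjunction of a list of formulas. -/
def bigIor : List (Fml V Val) → Fml V Val
  | [] => fBot
  | [φ] => φ
  | φ :: ψ :: rest => Fml.ior φ (bigIor (ψ :: rest))

/-- The conjunction of equations describing the restriction of the assignment `t`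
to the set `S` of variables. -/
def eqList (S : Finset V) (t : Asg V Val) : List ((v : V) × Val v) :=
  S.toList.map (fun w => ⟨w, t w⟩)

/-- The list of all assignments over the signature. -/
def allAsg : List (Asg V Val) := (Finset.univ : Finset (Asg V Val)).toList

/-- `η(v)`: for every tuple of values for the variables other than `v`, intervening
with those values forces `v` to take the value computed by `F.fn v` from the parents. -/
def eta (F : Sys V Val) (v : V) : Fml V Val :=
  bigAnd (allAsg.map (fun t =>
    Fml.cf (eqList (Finset.univ.erase v) t) (Fml.eq v (F.fn v (fun w _ => t w)))))

/-- `ξ(v)`: the value of `v` is unaffected by interventions on all other variables. -/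
def xi (v : V) : Fml V Val :=
  bigAnd ((Finset.univ : Finset (Val v)).toList.map (fun x =>
    bigAnd (allAsg.map (fun t =>
      Fml.or (Fml.neg (Fml.eq v x))
        (Fml.cf (eqList (Finset.univ.erase v) t) (Fml.eq v x))))))

/-- `Cn(F)`: the endogenous variables of `F` governed by a constant function. -/
def Cn (F : Sys V Val) : Finset V :=
  F.En.filter (fun v => ∃ c : Val v, ∀ p, F.fn v p = c)

/-- The non-constant endogenous variables `En(F) ∖ Cn(F)`. -/
def strictEn (F : Sys V Val) : Finset V := F.En \ Cn F

/-- `F_v ∼ G_v`: equivalence of the two functions for `v` up to dummy arguments. -/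
def SimFn (F G : Sys V Val) (v : V) : Prop :=
  ∀ (x : (w : V) → w ∈ F.pa v ∩ G.pa v → Val w)
    (y : (w : V) → w ∈ F.pa v \ G.pa v → Val w)
    (z : (w : V) → w ∈ G.pa v \ F.pa v → Val w),
    F.fn v (fun w hw =>
      if h : w ∈ G.pa v then x w (Finset.mem_inter.mpr ⟨hw, h⟩)
      else y w (Finset.mem_sdiff.mpr ⟨hw, h⟩)) =
    G.fn v (fun w hw =>
      if h : w ∈ F.pa v then x w (Finset.mem_inter.mpr ⟨h, hw⟩)
      else z w (Finset.mem_sdiff.mpr ⟨hw, h⟩))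

/-- `F ∼ G`: equivalence of systems of functions up to dummy arguments. -/
def Sim (F G : Sys V Val) : Prop :=
  strictEn F = strictEn G ∧ ∀ v ∈ strictEn F, SimFn F G v

/-- The CO[σ]-formula `Φ^F` characterizing the function component `F` up to `∼`. -/
def Phi (F : Sys V Val) : Fml V Val :=
  Fml.and (bigAnd (F.En.toList.map (fun v => eta F v)))
    (bigAnd ((((Finset.univ : Finset V) \ F.En) ∪ Cn F).toList.map (fun v => xi v)))

/-- The CO[σ]-formula `Θ^A`: the team component is included in `A`. -/
def Theta (A : Finset (Asg V Val)) : Fml V Val :=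
  bigOr (A.toList.map (fun s =>
    bigAnd ((Finset.univ : Finset V).toList.map (fun v => Fml.eq v (s v)))))

/-- `χ₁`: all variables are constant in the team. -/
def chi1 : Fml V Val :=
  bigAnd ((Finset.univ : Finset V).toList.map (fun v => Fml.dep [] v))

/-- `χ_k`: the team has at most `k` elements. -/
def chi : ℕ → Fml V Val
  | 0 => fBot
  | 1 => chi1
  | (k+2) => Fml.or chi1 (chi (k+1))

end CausalTeam

open CausalTeam

/-!
Since `χ₁` makes every variable constant, it holds exactly on teams with at most one
assignment; a tensor disjunction of `k` copies then holds exactly when the team is a union of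
`k` such teams, i.e. has at most `k` elements.
-/

theorem Set.exists_union_eq_of_encard_le_add {α : Type*} {s : Set α} {a b : ℕ∞}
    (h : s.encard ≤ a + b) : ∃ t u : Set α, t ∪ u = s ∧ t.encard ≤ a ∧ u.encard ≤ b := by
  by_cases hsa : s.encard ≤ a
  · exact ⟨s, ∅, Set.union_empty s, hsa, by simp⟩
  obtain ⟨t, hts, hta⟩ := Set.exists_subset_encard_eq (not_le.mp hsa).le
  refine ⟨t, s \ t, Set.union_sdiff_cancel hts, hta.le, ?_⟩
  have hsplit : a + (s \ t).encard = s.encard := by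
    rw [add_comm, ← hta, Set.encard_sdiff_add_encard_of_subset hts]
  exact (ENat.add_le_add_iff_left (ne_top_of_lt (not_le.mp hsa))).mp (hsplit ▸ h)

namespace CausalTeam

variable {T : Set (Asg V Val)} {F : Sys V Val}

theorem satC_fBot : satC T F fBot ↔ T = ∅ := by
  simp only [fBot, satC, Set.mem_singleton_iff, forall_eq, Set.eq_empty_iff_forall_notMem]
  exact ⟨fun ⟨hEq, hNeg⟩ s hs => hNeg s hs (hEq s hs), fun h => ⟨fun s hs => (h s hs).elim,
    fun s hs => (h s hs).elim⟩⟩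

theorem satC_fTop : satC T F fTop := fun _ _ h => Set.singleton_ne_empty _ (satC_fBot.mp h)

theorem satC_bigAnd {L : List (Fml V Val)} : satC T F (bigAnd L) ↔ ∀ φ ∈ L, satC T F φ := by
  match L with
  | [] => simpa [bigAnd] using satC_fTop
  | [φ] => simp [bigAnd]
  | φ :: ψ :: rest => simp only [bigAnd, satC, satC_bigAnd (L := ψ :: rest), List.forall_mem_cons]

theorem satC_chi1 : satC T F chi1 ↔ T.Subsingleton := by
  simp only [chi1, satC_bigAnd, List.forall_mem_map, Finset.mem_toList, Finset.mem_univ,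
    true_implies, satC, List.not_mem_nil, IsEmpty.forall_iff, implies_true]
  exact ⟨fun h s hs t ht => funext fun v => h v s hs t ht,
    fun h v s hs t ht => congrFun (h hs ht) v⟩

theorem satC_chi (k : ℕ) : satC T F (chi k) ↔ T.encard ≤ k := by
  induction k generalizing T with
  | zero => simp [chi, satC_fBot]
  | succ k ih =>
    cases k with
    | zero => simpa [chi] using satC_chi1.trans Set.encard_le_one_iff_subsingleton.symm
    | succ k =>
      simp only [chi, satC, satC_chi1, ← Set.encard_le_one_iff_subsingleton, ih]
      constructor
      · rintro ⟨T1, T2, rfl, h1, h2⟩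
        calc (T1 ∪ T2).encard ≤ T1.encard + T2.encard := Set.encard_union_le T1 T2
          _ ≤ 1 + (k + 1 : ℕ) := add_le_add h1 h2
          _ = (k + 1 + 1 : ℕ) := by push_cast; ring
      · intro h
        exact Set.exists_union_eq_of_encard_le_add (h.trans_eq (by push_cast; ring))

end CausalTeam

theorem chi_characterizes_cardinality_general {V : Type} [Fintype V] [DecidableEq V] [Nonempty V]
    {Val : V → Type} [∀ v, Fintype (Val v)] [∀ v, DecidableEq (Val v)] [∀ v, Nonempty (Val v)]
    (k : ℕ) (Sm : Finset (Asg V Val)) (F : Sys V Val) :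
    satC (↑Sm : Set (Asg V Val)) F (chi k) ↔ Sm.card ≤ k := by
  rw [satC_chi, Set.encard_coe_eq_coe_finsetCard, Nat.cast_le]

/-- **Cardinality characterization**: a recursive causal team satisfies `χ_k` iff its
team component has at most `k` elements. -/
theorem chi_characterizes_cardinality {V : Type} [Fintype V] [DecidableEq V] [Nonempty V]
    {Val : V → Type} [∀ v, Fintype (Val v)] [∀ v, DecidableEq (Val v)] [∀ v, Nonempty (Val v)]
    (k : ℕ) (Sm : Finset (Asg V Val)) (F : Sys V Val) (hS : ∀ s ∈ Sm, Compat F s) :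
    satC (↑Sm : Set (Asg V Val)) F (chi k) ↔ Sm.card ≤ k :=
  chi_characterizes_cardinality_general k Sm F
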